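/- Let k be a positive integer and m a positive integer, and let T_1, …, T_m be nonnegative random variables on a common probability space such that for every i and every real t ≥ 0 the probability that T_i > t is at most the probability that the Gamma distribution with shape k and rate 1 assigns to (t, ∞). Then the expectation of max_{1≤i≤m} T_i is at most 4k + 2·ln m + 2. -/

import Mathlib

open MeasureTheory ProbabilityTheory
open scoped ENNReal NNReal

lemma integral_exp_neg_half_Ioi (a : ℝ) :
    ∫ x in Set.Ioi a, Real.exp (-(x / 2)) = 2 * Real.exp (-(a / 2)) := by
  have h := MeasureTheory.integral_comp_mul_right_Ioi (fun y => Real.exp (-y)) a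
      (b := (1/2 : ℝ)) (by norm_num)
  have h2 : ∀ x : ℝ, Real.exp (-(x * (1/2))) = Real.exp (-(x/2)) := by
    intro x; ring_nf
  simp_rw [h2] at h
  rw [integral_exp_neg_Ioi] at h
  rw [h, smul_eq_mul]
  norm_num
  ring_nf

lemma pow_div_factorial_le_exp (y : ℝ) (hy : 0 ≤ y) (n : ℕ) :
    y ^ n / n.factorial ≤ Real.exp y := by
  calc y ^ n / n.factorial ≤ ∑ i ∈ Finset.range (n + 1), y ^ i / i.factorial := by
        refine Finset.single_le_sum (f := fun i => y ^ i / (i.factorial : ℝ)) ?_ ?_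
        · intro i _; positivity
        · exact Finset.self_mem_range_succ n
    _ ≤ Real.exp y := Real.sum_le_exp_of_nonneg hy _

lemma gammaPDFReal_le (k : ℕ) (hk : 0 < k) {x : ℝ} (hx : 0 ≤ x) :
    gammaPDFReal k 1 x ≤ 2 ^ (k - 1) * Real.exp (-(x / 2)) := by
  rw [gammaPDFReal, if_pos hx]
  have hk1 : ((k - 1 : ℕ) : ℝ) + 1 = (k : ℝ) := by
    have h : k - 1 + 1 = k := Nat.succ_pred_eq_of_pos hk
    exact_mod_cast h
  have hΓ : Real.Gamma (k : ℝ) = ((k - 1).factorial : ℝ) := by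
    rw [← hk1, Real.Gamma_nat_eq_factorial]
  have hrpow : x ^ ((k : ℝ) - 1) = x ^ (k - 1 : ℕ) := by
    rw [← Real.rpow_natCast x (k - 1)]
    congr 1
    rw [← hk1]; ring
  set c : ℝ := 2 ^ (k - 1) with hc
  set F : ℝ := ((k - 1).factorial : ℝ) with hF
  have hFpos : 0 < F := by positivity
  have hcpos : 0 < c := by positivity
  have h1 : (x / 2) ^ (k - 1) ≤ F * Real.exp (x / 2) := by
    have := pow_div_factorial_le_exp (x / 2) (by positivity) (k - 1)
    rw [div_le_iff₀ hFpos] at this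
    linarith [this]
  have h3 : x ^ (k - 1 : ℕ) ≤ c * (F * Real.exp (x / 2)) := by
    have hxe : x ^ (k - 1 : ℕ) = c * (x / 2) ^ (k - 1) := by
      rw [div_pow, hc]
      field_simp
    rw [hxe]
    exact mul_le_mul_of_nonneg_left h1 hcpos.le
  have hexp : Real.exp (-(x / 2)) = Real.exp (x / 2) * Real.exp (-x) := by
    rw [← Real.exp_add]; ring_nf
  rw [hΓ, hrpow, Real.one_rpow, one_mul, one_div, hexp]
  have hgoal : F⁻¹ * x ^ (k - 1 : ℕ) ≤ c * Real.exp (x / 2) := by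
    rw [inv_mul_le_iff₀ hFpos]
    calc x ^ (k - 1 : ℕ) ≤ c * (F * Real.exp (x / 2)) := h3
      _ = F * (c * Real.exp (x / 2)) := by ring
  calc F⁻¹ * x ^ (k - 1 : ℕ) * Real.exp (-x)
      ≤ c * Real.exp (x / 2) * Real.exp (-x) :=
        mul_le_mul_of_nonneg_right hgoal (Real.exp_pos _).le
    _ = c * (Real.exp (x / 2) * Real.exp (-x)) := by ring

lemma exp_neg_half_integrableOn (a : ℝ) :
    IntegrableOn (fun x : ℝ => Real.exp (-(x / 2))) (Set.Ioi a) := by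
  have h := exp_neg_integrableOn_Ioi a (b := (1/2 : ℝ)) (by norm_num)
  have heq : (fun x : ℝ => Real.exp (-(1/2 : ℝ) * x)) = fun x : ℝ => Real.exp (-(x / 2)) := by
    funext x; ring_nf
  rwa [heq] at h

lemma gammaMeasure_tail_le (k : ℕ) (hk : 0 < k) (t : ℝ) (ht : 0 ≤ t) :
    gammaMeasure k 1 (Set.Ioi t) ≤ ENNReal.ofReal (2 ^ k * Real.exp (-(t / 2))) := by
  rw [gammaMeasure, withDensity_apply _ measurableSet_Ioi]
  have hmeas : Measurable fun x : ℝ => ENNReal.ofReal (2 ^ (k - 1) * Real.exp (-(x / 2))) :=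
    ((Real.measurable_exp.comp ((measurable_id.div_const 2).neg)).const_mul _).ennreal_ofReal
  have hle : ∫⁻ x in Set.Ioi t, gammaPDF k 1 x
      ≤ ∫⁻ x in Set.Ioi t, ENNReal.ofReal (2 ^ (k - 1) * Real.exp (-(x / 2))) := by
    refine setLIntegral_mono hmeas fun x hx => ?_
    rw [gammaPDF]
    exact ENNReal.ofReal_le_ofReal (gammaPDFReal_le k hk (le_trans ht (le_of_lt hx)))
  refine hle.trans ?_
  have hint : IntegrableOn (fun x : ℝ => 2 ^ (k - 1) * Real.exp (-(x / 2))) (Set.Ioi t) :=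
    (exp_neg_half_integrableOn t).const_mul _
  rw [← ofReal_integral_eq_lintegral_ofReal hint (ae_of_all _ fun x => by positivity)]
  apply ENNReal.ofReal_le_ofReal
  rw [integral_const_mul, integral_exp_neg_half_Ioi]
  have : (2:ℝ) ^ (k - 1) * 2 = 2 ^ k := by
    rw [← pow_succ, Nat.sub_add_cancel hk]
  calc (2:ℝ) ^ (k - 1) * (2 * Real.exp (-(t / 2)))
      = (2 ^ (k - 1) * 2) * Real.exp (-(t / 2)) := by ring
    _ = 2 ^ k * Real.exp (-(t / 2)) := by rw [this]
    _ ≤ 2 ^ k * Real.exp (-(t / 2)) := le_refl _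

/-- **`O(k + log m)` bound on the expected maximum of `m` Gamma(k,1)-dominated times.**
If each of `m` nonnegative random times `T i` is tail-dominated by the Gamma distribution
with shape `k` and rate 1, then the expected maximum of the `T i` is at most
`4k + 2 ln m + 2`. -/
theorem expected_max_le_of_gamma_tail_dominated'
    {Ω : Type*} [MeasurableSpace Ω] (μ : Measure Ω) [IsProbabilityMeasure μ]
    (k m : ℕ) (hk : 0 < k) (hm : 0 < m)
    (T : Fin m → Ω → ℝ) (hmeas : ∀ i, Measurable (T i)) (hT0 : ∀ i ω, 0 ≤ T i ω)
    (htail : ∀ i, ∀ t : ℝ, 0 ≤ t →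
      μ {ω | t < T i ω} ≤ gammaMeasure k 1 (Set.Ioi t)) :
    ∫ ω, (⨆ i, T i ω) ∂μ ≤ 4 * (k : ℝ) + 2 * Real.log m + 2 := by
  haveI : Nonempty (Fin m) := ⟨⟨0, hm⟩⟩
  set f : Ω → ℝ := fun ω => ⨆ i, T i ω with hf_def
  have hbdd : ∀ ω, BddAbove (Set.range fun i => T i ω) :=
    fun ω => (Set.finite_range _).bddAbove
  have hfmeas : Measurable f := by
    have h1 : Measurable (Finset.univ.sup' Finset.univ_nonempty T) :=
      Finset.measurable_sup' _ fun i _ => hmeas i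
    have h2 : f = Finset.univ.sup' Finset.univ_nonempty T := by
      funext ω
      show (⨆ i, T i ω) = _
      rw [Finset.sup'_apply, Finset.sup'_univ_eq_ciSup]
    rwa [h2]
  have hf0 : ∀ ω, 0 ≤ f ω :=
    fun ω => le_trans (hT0 ⟨0, hm⟩ ω) (le_ciSup (hbdd ω) ⟨0, hm⟩)
  have hk1 : (1 : ℝ) ≤ (k : ℝ) := by exact_mod_cast hk
  have hm1 : (1 : ℝ) ≤ (m : ℝ) := by exact_mod_cast hm
  have hmpos : (0 : ℝ) < (m : ℝ) := by linarith
  have hlogm : 0 ≤ Real.log m := Real.log_nonneg hm1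
  set a : ℝ := 2 * k + 2 * Real.log m with ha_def
  have ha0 : 0 < a := by rw [ha_def]; nlinarith
  have hRHS0 : 0 ≤ 4 * (k : ℝ) + 2 * Real.log m + 2 := by nlinarith
  have hgmeas : Measurable fun t : ℝ => ENNReal.ofReal ((2:ℝ) ^ k * Real.exp (-(t / 2))) :=
    ((Real.measurable_exp.comp ((measurable_id.div_const 2).neg)).const_mul _).ennreal_ofReal
  have key : ∫⁻ ω, ENNReal.ofReal (f ω) ∂μ
      ≤ ENNReal.ofReal (4 * (k : ℝ) + 2 * Real.log m + 2) := by
    rw [lintegral_eq_lintegral_meas_lt μ (ae_of_all _ hf0) hfmeas.aemeasurable]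
    have hsplit : Set.Ioi (0:ℝ) = Set.Ioc 0 a ∪ Set.Ioi a :=
      (Set.Ioc_union_Ioi_eq_Ioi ha0.le).symm
    rw [hsplit, lintegral_union measurableSet_Ioi (Set.Ioc_disjoint_Ioi le_rfl)]
    have part1 : ∫⁻ t in Set.Ioc 0 a, μ {ω | t < f ω} ≤ ENNReal.ofReal a := by
      calc ∫⁻ t in Set.Ioc 0 a, μ {ω | t < f ω}
          ≤ ∫⁻ _ in Set.Ioc 0 a, 1 := lintegral_mono fun t => prob_le_one
        _ = ENNReal.ofReal a := by
            rw [setLIntegral_one, Real.volume_Ioc, sub_zero]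
    have hbound : ∀ t ∈ Set.Ioi a,
        μ {ω | t < f ω} ≤ (m : ℝ≥0∞) * ENNReal.ofReal ((2:ℝ) ^ k * Real.exp (-(t / 2))) := by
      intro t ht
      have ht0 : 0 ≤ t := le_trans ha0.le (le_of_lt ht)
      have hsub : {ω | t < f ω} ⊆ ⋃ i, {ω | t < T i ω} := by
        intro ω hω
        obtain ⟨i, hi⟩ := (lt_ciSup_iff (hbdd ω)).mp hω
        exact Set.mem_iUnion.2 ⟨i, hi⟩
      calc μ {ω | t < f ω} ≤ μ (⋃ i, {ω | t < T i ω}) := measure_mono hsub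
        _ ≤ ∑' i, μ {ω | t < T i ω} := measure_iUnion_le _
        _ = ∑ i, μ {ω | t < T i ω} := tsum_fintype _
        _ ≤ ∑ i : Fin m, ENNReal.ofReal ((2:ℝ) ^ k * Real.exp (-(t / 2))) :=
            Finset.sum_le_sum fun i _ =>
              (htail i t ht0).trans (gammaMeasure_tail_le k hk t ht0)
        _ = (m : ℝ≥0∞) * ENNReal.ofReal ((2:ℝ) ^ k * Real.exp (-(t / 2))) := by
            rw [Finset.sum_const, Finset.card_univ, Fintype.card_fin, nsmul_eq_mul]
    have part2 : ∫⁻ t in Set.Ioi a, μ {ω | t < f ω} ≤ ENNReal.ofReal 2 := by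
      have hint : IntegrableOn (fun x : ℝ => (2:ℝ) ^ k * Real.exp (-(x / 2))) (Set.Ioi a) :=
        (exp_neg_half_integrableOn a).const_mul _
      calc ∫⁻ t in Set.Ioi a, μ {ω | t < f ω}
          ≤ ∫⁻ t in Set.Ioi a, (m : ℝ≥0∞) * ENNReal.ofReal ((2:ℝ) ^ k * Real.exp (-(t / 2))) :=
            setLIntegral_mono (hgmeas.const_mul _) hbound
        _ = (m : ℝ≥0∞) * ∫⁻ t in Set.Ioi a, ENNReal.ofReal ((2:ℝ) ^ k * Real.exp (-(t / 2))) :=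
            lintegral_const_mul _ hgmeas
        _ = (m : ℝ≥0∞) * ENNReal.ofReal ((2:ℝ) ^ k * (2 * Real.exp (-(a / 2)))) := by
            rw [← ofReal_integral_eq_lintegral_ofReal hint (ae_of_all _ fun x => by positivity),
              integral_const_mul, integral_exp_neg_half_Ioi]
        _ ≤ ENNReal.ofReal 2 := by
            rw [← ENNReal.ofReal_natCast m, ← ENNReal.ofReal_mul hmpos.le]
            apply ENNReal.ofReal_le_ofReal
            have hexpa : Real.exp (-(a / 2)) = Real.exp (-(k : ℝ)) / m := by
              have h1 : -(a / 2) = -(k : ℝ) + -(Real.log m) := by rw [ha_def]; ring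
              rw [h1, Real.exp_add, Real.exp_neg (Real.log m), Real.exp_log hmpos,
                div_eq_mul_inv]
            have h2e : (2:ℝ) ^ k ≤ Real.exp (k : ℝ) := by
              have hk2 : Real.exp (k : ℝ) = Real.exp 1 ^ k := by
                rw [← Real.exp_nat_mul]; ring_nf
              rw [hk2]
              refine pow_le_pow_left₀ (by norm_num) ?_ k
              have := Real.add_one_le_exp 1
              linarith
            have hle1 : (2:ℝ) ^ k * Real.exp (-(k : ℝ)) ≤ 1 := by
              rw [Real.exp_neg]
              have h := mul_le_mul_of_nonneg_right h2e
                (inv_nonneg.2 (Real.exp_pos (k : ℝ)).le)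
              rwa [mul_inv_cancel₀ (Real.exp_pos (k : ℝ)).ne'] at h
            calc (m : ℝ) * ((2:ℝ) ^ k * (2 * Real.exp (-(a / 2))))
                = 2 * ((2:ℝ) ^ k * Real.exp (-(k : ℝ))) := by
                  rw [hexpa]; field_simp
              _ ≤ 2 * 1 := by nlinarith
              _ = 2 := mul_one 2
    calc (∫⁻ t in Set.Ioc 0 a, μ {ω | t < f ω}) + ∫⁻ t in Set.Ioi a, μ {ω | t < f ω}
        ≤ ENNReal.ofReal a + ENNReal.ofReal 2 := add_le_add part1 part2
      _ = ENNReal.ofReal (a + 2) := (ENNReal.ofReal_add ha0.le (by norm_num)).symm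
      _ ≤ ENNReal.ofReal (4 * (k : ℝ) + 2 * Real.log m + 2) := by
          apply ENNReal.ofReal_le_ofReal
          rw [ha_def]; nlinarith
  rw [integral_eq_lintegral_of_nonneg_ae (ae_of_all _ hf0) hfmeas.aestronglyMeasurable]
  exact ENNReal.toReal_le_of_le_ofReal hRHS0 key
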